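/- The within-cluster sum of squares function f attains its global minimum (over all thresholds s strictly between the minimum and maximum data values) at some data point; i.e., there exists an index i with min p < p_i ≤ max p such that f(p_i) ≤ f(s) for all valid thresholds s. -/

import Mathlib

open Finset

/-- Within-cluster sum of squares for the split `{p i ≥ s}` vs `{p i < s}`. -/
noncomputable def wss {n : ℕ} (p : Fin n → ℝ) (s : ℝ) : ℝ :=
  let A := Finset.univ.filter (fun i => s ≤ p i)
  let B := Finset.univ.filter (fun i => p i < s)
  (∑ i ∈ A, (p i - (∑ j ∈ A, p j) / A.card) ^ 2) +
  (∑ i ∈ B, (p i - (∑ j ∈ B, p j) / B.card) ^ 2)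

/-! `wss p s` depends on `s` only through the split it induces, and every split with a
nonempty upper cluster is induced by the smallest data value of that cluster. The finitely
many data values above `min p` therefore realise every value of `wss` on valid thresholds,
and the best of them is a global minimiser. -/

theorem wss_congr {n : ℕ} (p : Fin n → ℝ) {s t : ℝ} (h : ∀ k, s ≤ p k ↔ t ≤ p k) :
    wss p s = wss p t := by
  have hA : univ.filter (fun k => s ≤ p k) = univ.filter (fun k => t ≤ p k) :=
    filter_congr fun k _ => h k
  have hB : univ.filter (fun k => p k < s) = univ.filter (fun k => p k < t) :=
    filter_congr fun k _ => by simp only [← not_le, h k]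
  simp only [wss, hA, hB]

theorem exists_wss_eq_dataPoint {n : ℕ} (p : Fin n → ℝ) {s : ℝ} (hs : ∃ j, s ≤ p j) :
    ∃ j, s ≤ p j ∧ wss p (p j) = wss p s := by
  obtain ⟨j, hjU, hjmin⟩ := (univ.filter fun k => s ≤ p k).exists_min_image p
    (by simpa [Finset.Nonempty] using hs)
  have hj : s ≤ p j := (mem_filter.mp hjU).2
  exact ⟨j, hj, wss_congr p fun k => ⟨hj.trans, fun hk => hjmin k (by simpa using hk)⟩⟩

theorem exists_inf'_lt_of_ne {ι α : Type*} [LinearOrder α] {s : Finset ι} (hs : s.Nonempty)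
    {f : ι → α} {a b : ι} (ha : a ∈ s) (hb : b ∈ s) (hab : f a ≠ f b) :
    ∃ i ∈ s, s.inf' hs f < f i := by
  rcases (inf'_le f ha).lt_or_eq with h | h
  · exact ⟨a, ha, h⟩
  · exact ⟨b, hb, (inf'_le f hb).lt_of_ne (h ▸ hab)⟩

/-- The within-cluster sum of squares attains its global minimum (over thresholds
making both clusters nonempty) at a data point `p i` with `min p < p i ≤ max p`. -/
theorem wss_min_at_data_point {n : ℕ} (hn : 2 ≤ n) (p : Fin n → ℝ)
    (hne : ∃ i j : Fin n, p i ≠ p j) :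
    ∃ i : Fin n,
      Finset.univ.inf' (Finset.univ_nonempty_iff.mpr ⟨⟨0, by omega⟩⟩) p < p i ∧
      p i ≤ Finset.univ.sup' (Finset.univ_nonempty_iff.mpr ⟨⟨0, by omega⟩⟩) p ∧
      ∀ s : ℝ, (∃ j, p j < s) → (∃ j, s ≤ p j) → wss p (p i) ≤ wss p s := by
  set m := univ.inf' (univ_nonempty_iff.mpr ⟨⟨0, by omega⟩⟩) p
  obtain ⟨a, b, hab⟩ := hne
  have hS : (univ.filter fun i => m < p i).Nonempty := by
    simpa [Finset.Nonempty] using exists_inf'_lt_of_ne _ (mem_univ a) (mem_univ b) hab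
  obtain ⟨i, hiS, hi⟩ := (univ.filter fun i => m < p i).exists_min_image (fun i => wss p (p i)) hS
  refine ⟨i, (mem_filter.mp hiS).2, le_sup' p (mem_univ i), fun s ⟨k, hks⟩ hs => ?_⟩
  obtain ⟨j, hsj, hj⟩ := exists_wss_eq_dataPoint p hs
  have hmj : m < p j := (inf'_le p (mem_univ k)).trans_lt (hks.trans_le hsj)
  exact hj ▸ hi j (mem_filter.mpr ⟨mem_univ j, hmj⟩)
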